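/- The hermitian form L over Λ = ℤ[x,x⁻¹] (with involution x ↦ x⁻¹), given by substituting t = x + x⁻¹ into the matrix with rows (1+t+t², t+t², 1+t, t), (t+t², 1+t+t², t, 1+t), (1+t, t, 2, 0), (t, 1+t, 0, 2), is not extended from the integers: there is no integer matrix J and invertible matrix P over Λ with P L P* = J, where P* denotes conjugate transpose. -/

import Mathlib

open Matrix

noncomputable section

/-- The Laurent polynomial ring `Λ = ℤ[x,x⁻¹]` as the group ring `ℤ[ℤ]`. -/
abbrev Lau := AddMonoidAlgebra ℤ ℤ

/-- The monomial `x^d`. -/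
def Xl (d : ℤ) : Lau := AddMonoidAlgebra.single d 1

/-- The involution of `Λ` sending `x` to `x⁻¹`. -/
def conjL (f : Lau) : Lau := AddMonoidAlgebra.ofCoeff (Finsupp.mapDomain (fun d : ℤ => -d) f.coeff)

/-- `t = x + x⁻¹ ∈ Λ`. -/
def tL : Lau := Xl 1 + Xl (-1)

/-- The hermitian matrix `L` over `Λ`, obtained by substituting `t = x + x⁻¹`. -/
def LmatL : Matrix (Fin 4) (Fin 4) Lau :=
  !![1 + tL + tL ^ 2, tL + tL ^ 2, 1 + tL, tL;
     tL + tL ^ 2, 1 + tL + tL ^ 2, tL, 1 + tL;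
     1 + tL, tL, 2, 0;
     tL, 1 + tL, 0, 2]

/-! Specialising `x ↦ 1` and `x ↦ i` turns `P L P* = J` into congruences over `ℤ` and over the
Gaussian integers, under which `L` becomes the standard forms `A Aᵀ` and `B Bᵀ` respectively.
With `G = P(1) A`, the matrix `D = G⁻¹ P(i) B` is then unitary over `ℤ[i]`, so every row of `D` has
at most one entry of odd norm. But `P(i) ≡ P(1)` modulo `1 + i`, hence `D ≡ A⁻¹ B`, and the first
row of `A⁻¹ B` has three odd entries. -/

open LaurentPolynomial

lemma LaurentPolynomial.ringHom_ext_int {S : Type*} [Semiring S] {f g : ℤ[T;T⁻¹] →+* S}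
    (h : f (T 1) = g (T 1)) : f = g :=
  AddMonoidAlgebra.ringHom_ext' (RingHom.ext_int _ _) (MonoidHom.ext_mint h)

lemma conjL_eq_invert (f : Lau) : conjL f = invert f := rfl

section Specialization

variable {S : Type*} [CommRing S]

abbrev evalUnit (u : Sˣ) : Lau →+* S := eval₂ (Int.castRingHom S) u

lemma evalUnit_conjL (u : Sˣ) (f : Lau) : evalUnit u (conjL f) = evalUnit u⁻¹ f := by
  rw [conjL_eq_invert, ← RingHom.coe_coe invert, ← RingHom.comp_apply]
  congr 1
  exact LaurentPolynomial.ringHom_ext_int (by simp)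

lemma map_evalUnit_congr (u : Sˣ) {n : Type*} [Fintype n] (P M : Matrix n n Lau) :
    (P * M * (P.map conjL)ᵀ).map (evalUnit u) =
      P.map (evalUnit u) * M.map (evalUnit u) * (P.map (evalUnit u⁻¹))ᵀ := by
  simp only [Matrix.map_mul, Matrix.transpose_map, Matrix.map_map]
  congr 3
  ext f
  exact evalUnit_conjL u f

end Specialization

namespace GaussianInt

def iUnit : GaussianIntˣ where
  val := Zsqrtd.sqrtd
  inv := -Zsqrtd.sqrtd
  val_inv := by ext <;> simp
  inv_val := by ext <;> simp

lemma star_iUnit : star (iUnit : GaussianInt) = ↑iUnit⁻¹ := by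
  ext <;> simp [iUnit]

-- reduction modulo `1 + i`, whose residue field is `𝔽₂`
def toZModTwo : GaussianInt →+* ZMod 2 := Zsqrtd.lift ⟨1, by decide⟩

lemma toZModTwo_star (z : GaussianInt) : toZModTwo (star z) = toZModTwo z := by
  simp [toZModTwo, Zsqrtd.lift_apply_apply]

lemma intCast_norm (z : GaussianInt) : (z.norm : ZMod 2) = toZModTwo z := by
  have h := congrArg toZModTwo (Zsqrtd.norm_eq_mul_conj z)
  rw [map_intCast, map_mul, toZModTwo_star] at h
  rw [h]
  generalize toZModTwo z = a
  fin_cases a <;> rfl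

lemma toZModTwo_iUnit : toZModTwo iUnit = 1 := by
  simp [toZModTwo, iUnit, Zsqrtd.lift_apply_apply]

lemma star_evalUnit_iUnit (f : Lau) :
    star (evalUnit iUnit f) = evalUnit iUnit⁻¹ f := by
  rw [← starRingEnd_apply, ← RingHom.comp_apply]
  congr 1
  exact LaurentPolynomial.ringHom_ext_int (by simp [starRingEnd_apply, star_iUnit])

lemma conjTranspose_map_evalUnit_iUnit {n : Type*} (P : Matrix n n Lau) :
    (P.map (evalUnit iUnit))ᴴ = (P.map (evalUnit iUnit⁻¹))ᵀ :=
  Matrix.ext fun _ _ ↦ star_evalUnit_iUnit _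

lemma toZModTwo_evalUnit_iUnit (f : Lau) :
    toZModTwo (evalUnit iUnit f) = (evalUnit (1 : ℤˣ) f : ZMod 2) := by
  rw [← RingHom.comp_apply, ← eq_intCast (Int.castRingHom _), ← RingHom.comp_apply]
  congr 1
  exact LaurentPolynomial.ringHom_ext_int (by simp [toZModTwo_iUnit])

variable {n : Type*} [Fintype n] [DecidableEq n]

lemma sum_norm_eq_one {D : Matrix n n GaussianInt} (hD : D ∈ Matrix.unitaryGroup n GaussianInt)
    (i : n) : ∑ j, (D i j).norm = 1 := by
  have h := congrFun (congrFun (Matrix.mem_unitaryGroup_iff.mp hD) i) i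
  simp only [Matrix.mul_apply, Matrix.star_apply, Matrix.one_apply_eq] at h
  exact_mod_cast (show ((∑ j, (D i j).norm : ℤ) : GaussianInt) = 1 by
    simpa [Zsqrtd.norm_eq_mul_conj] using h)

lemma toZModTwo_eq_zero_or_eq_zero {D : Matrix n n GaussianInt}
    (hD : D ∈ Matrix.unitaryGroup n GaussianInt) (i : n) {j k : n} (hjk : j ≠ k) :
    toZModTwo (D i j) = 0 ∨ toZModTwo (D i k) = 0 := by
  have one_le_norm {z : GaussianInt} (hz : toZModTwo z ≠ 0) : 1 ≤ z.norm := by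
    have h0 : z.norm ≠ 0 := fun h ↦ hz (by rw [← intCast_norm, h, Int.cast_zero])
    have := Zsqrtd.norm_nonneg (by norm_num) z
    omega
  by_contra! h
  have hsum := Finset.sum_le_sum_of_subset_of_nonneg (f := fun l ↦ (D i l).norm)
    (Finset.subset_univ {j, k}) (fun l _ _ ↦ Zsqrtd.norm_nonneg (by norm_num) _)
  rw [Finset.sum_pair hjk, sum_norm_eq_one hD] at hsum
  linarith [one_le_norm h.1, one_le_norm h.2]

end GaussianInt

section Congruence

open GaussianInt

lemma conjTranspose_map_intCast {R m n : Type*} [Ring R] [StarRing R] (X : Matrix m n ℤ) :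
    (X.map (Int.castRingHom R))ᴴ = Xᵀ.map (Int.castRingHom R) :=
  Matrix.ext fun _ _ ↦ by simp

variable {n : Type*} [Fintype n] [DecidableEq n]

lemma mem_unitaryGroup_of_congr {G B : Matrix n n ℤ} {Q : Matrix n n GaussianInt}
    (hG : IsUnit G.det)
    (h : Q * (B * Bᵀ).map (Int.castRingHom _) * Qᴴ = (G * Gᵀ).map (Int.castRingHom _)) :
    G⁻¹.map (Int.castRingHom _) * Q * B.map (Int.castRingHom _) ∈ unitaryGroup n GaussianInt := by
  rw [mem_unitaryGroup_iff, star_eq_conjTranspose]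
  have hGG : G⁻¹ * (G * Gᵀ) * G⁻¹ᵀ = 1 := by
    rw [← Matrix.mul_assoc, nonsing_inv_mul G hG, Matrix.one_mul, ← transpose_mul,
      nonsing_inv_mul G hG, transpose_one]
  calc G⁻¹.map (Int.castRingHom _) * Q * B.map (Int.castRingHom _) *
        (G⁻¹.map (Int.castRingHom _) * Q * B.map (Int.castRingHom _))ᴴ
      = G⁻¹.map (Int.castRingHom _) * (Q * (B * Bᵀ).map (Int.castRingHom _) * Qᴴ) *
          G⁻¹ᵀ.map (Int.castRingHom _) := by
        simp only [conjTranspose_mul, conjTranspose_map_intCast, Matrix.map_mul]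
        noncomm_ring
    _ = 1 := by
        rw [h, ← Matrix.map_mul, ← Matrix.map_mul, hGG, Matrix.map_one _ (map_zero _) (map_one _)]

theorem intCast_inv_mul_apply_eq_zero_or_of_congr {A B P : Matrix n n ℤ}
    {Q : Matrix n n GaussianInt}
    (hA : IsUnit A.det) (hP : IsUnit P.det)
    (hQ : Q.map toZModTwo = P.map (Int.castRingHom _))
    (h : Q * (B * Bᵀ).map (Int.castRingHom _) * Qᴴ =
      (P * (A * Aᵀ) * Pᵀ).map (Int.castRingHom _))
    (i : n) {j k : n} (hjk : j ≠ k) :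
    ((A⁻¹ * B) i j : ZMod 2) = 0 ∨ ((A⁻¹ * B) i k : ZMod 2) = 0 := by
  set D := (P * A)⁻¹.map (Int.castRingHom _) * Q * B.map (Int.castRingHom _)
  have hD : D ∈ unitaryGroup n GaussianInt := by
    refine mem_unitaryGroup_of_congr (by rw [det_mul]; exact hP.mul hA) ?_
    rw [h, transpose_mul, Matrix.mul_assoc, Matrix.mul_assoc, Matrix.mul_assoc]
  have hcast : toZModTwo.comp (Int.castRingHom GaussianInt) = Int.castRingHom (ZMod 2) :=
    RingHom.ext_int _ _
  have hDmod : D.map toZModTwo = (A⁻¹ * B).map (Int.castRingHom (ZMod 2)) := by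
    simp only [D, Matrix.map_mul, Matrix.map_map, ← RingHom.coe_comp, hcast, hQ]
    rw [← Matrix.map_mul, ← Matrix.map_mul, Matrix.mul_inv_rev, Matrix.mul_assoc A⁻¹,
      nonsing_inv_mul P hP, Matrix.mul_one, Matrix.map_mul]
  have := toZModTwo_eq_zero_or_eq_zero hD i hjk
  rwa [← Matrix.map_apply (f := toZModTwo), ← Matrix.map_apply (f := toZModTwo), hDmod] at this

end Congruence

lemma evalUnit_tL {S : Type*} [CommRing S] (u : Sˣ) : evalUnit u tL = u + ↑u⁻¹ := by
  show evalUnit u (T 1 + T (-1)) = _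
  simp

def factorAtOne : Matrix (Fin 4) (Fin 4) ℤ := !![2, 1, 1, 1; 1, 1, 1, 2; 1, 1, 0, 0; 0, 0, 1, 1]

def factorAtOneInv : Matrix (Fin 4) (Fin 4) ℤ :=
  !![1, 0, -1, -1; -1, 0, 2, 1; 0, -1, 1, 2; 0, 1, -1, -1]

lemma factorAtOneInv_mul : factorAtOneInv * factorAtOne = 1 := by decide

def factorAtI : Matrix (Fin 4) (Fin 4) ℤ := !![1, 0, 0, 0; 0, 1, 0, 0; 1, 0, 1, 0; 0, 1, 0, 1]

lemma LmatL_map_evalUnit_one :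
    LmatL.map (evalUnit (1 : ℤˣ)) = factorAtOne * factorAtOneᵀ := by
  refine Matrix.ext fun i j ↦ ?_
  fin_cases i <;> fin_cases j <;>
    simp [LmatL, evalUnit_tL, map_ofNat _ 2, factorAtOne, Matrix.mul_apply, Fin.sum_univ_four]

lemma LmatL_map_evalUnit_iUnit :
    LmatL.map (evalUnit GaussianInt.iUnit) =
      (factorAtI * factorAtIᵀ).map (Int.castRingHom GaussianInt) := by
  refine Matrix.ext fun i j ↦ ?_
  fin_cases i <;> fin_cases j <;>
    simp [LmatL, evalUnit_tL, map_ofNat _ 2, GaussianInt.iUnit, factorAtI, Matrix.vecMul,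
      dotProduct, Fin.sum_univ_four]

lemma map_map_intCast {R S m n : Type*} [Ring R] [Ring S] (f : R →+* S) (J : Matrix m n ℤ) :
    (J.map (fun z ↦ (z : R))).map f = J.map (Int.castRingHom S) := by
  simp [Matrix.map_map, Function.comp_def]

/-- The hermitian form `L` over `Λ = ℤ[x,x⁻¹]` is not extended from the integers:
there are no integer matrix `J` and invertible matrix `P` over `Λ` with
`P L P* = J`, where `P*` is the conjugate transpose. -/
theorem stmt_19 :
    ¬ ∃ (J : Matrix (Fin 4) (Fin 4) ℤ) (P : Matrix (Fin 4) (Fin 4) Lau),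
        IsUnit P.det ∧ P * LmatL * (P.map conjL)ᵀ = J.map (fun z => (z : Lau)) := by
  rintro ⟨J, P, hdet, hP⟩
  have hP₁ : IsUnit (P.map (evalUnit (1 : ℤˣ))).det :=
    RingHom.map_det (evalUnit (1 : ℤˣ)) P ▸ hdet.map _
  have h₁ := congrArg (Matrix.map · (evalUnit (1 : ℤˣ))) hP
  have hi := congrArg (Matrix.map · (evalUnit GaussianInt.iUnit)) hP
  simp only [map_evalUnit_congr, inv_one, LmatL_map_evalUnit_one, map_map_intCast,
    Int.coe_castRingHom, Int.cast_id, Matrix.map_id'] at h₁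
  simp only [map_evalUnit_congr, LmatL_map_evalUnit_iUnit, map_map_intCast,
    ← GaussianInt.conjTranspose_map_evalUnit_iUnit] at hi
  have hQ : (P.map (evalUnit GaussianInt.iUnit)).map GaussianInt.toZModTwo =
      (P.map (evalUnit (1 : ℤˣ))).map (Int.castRingHom _) :=
    Matrix.ext fun _ _ ↦ GaussianInt.toZModTwo_evalUnit_iUnit _
  have := intCast_inv_mul_apply_eq_zero_or_of_congr
    (isUnit_det_of_left_inverse factorAtOneInv_mul) hP₁ hQ (h₁ ▸ hi) 0 (j := 1) (k := 2) (by decide)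
  rw [inv_eq_left_inv factorAtOneInv_mul] at this
  revert this
  decide

end
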